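/- arXiv:1203.3760 — 2 statements merged into one kernel-verified Lean document; each statement's English description precedes it below -/
import Mathlib

section
/- The vectors r⁽¹⁾ = n, r⁽²⁾ = n × u, r⁽³⁾ = (n·u)u − ‖u‖²n satisfy M(n,u) r⁽¹⁾ = 0, M(n,u) r⁽²⁾ = (n·u) r⁽²⁾, and M(n,u) r⁽³⁾ = (n·u) r⁽³⁾, i.e., they are eigenvectors of M(n,u) with eigenvalues 0, n·u, n·u respectively. -/
open Matrix

theorem eigenvectors_flux_jacobian (u n : Fin 3 → ℝ)
    (hn : n 0 ^ 2 + n 1 ^ 2 + n 2 ^ 2 = 1) :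
    (!![n 1 * u 1 + n 2 * u 2, -(n 0 * u 1), -(n 0 * u 2);
        -(n 1 * u 0), n 0 * u 0 + n 2 * u 2, -(n 1 * u 2);
        -(n 2 * u 0), -(n 2 * u 1), n 0 * u 0 + n 1 * u 1] :
      Matrix (Fin 3) (Fin 3) ℝ) *ᵥ n = 0
    ∧ (!![n 1 * u 1 + n 2 * u 2, -(n 0 * u 1), -(n 0 * u 2);
        -(n 1 * u 0), n 0 * u 0 + n 2 * u 2, -(n 1 * u 2);
        -(n 2 * u 0), -(n 2 * u 1), n 0 * u 0 + n 1 * u 1] :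
      Matrix (Fin 3) (Fin 3) ℝ) *ᵥ (crossProduct n u)
      = (n 0 * u 0 + n 1 * u 1 + n 2 * u 2) • (crossProduct n u)
    ∧ (!![n 1 * u 1 + n 2 * u 2, -(n 0 * u 1), -(n 0 * u 2);
        -(n 1 * u 0), n 0 * u 0 + n 2 * u 2, -(n 1 * u 2);
        -(n 2 * u 0), -(n 2 * u 1), n 0 * u 0 + n 1 * u 1] :
      Matrix (Fin 3) (Fin 3) ℝ) *ᵥ
        ((n 0 * u 0 + n 1 * u 1 + n 2 * u 2) • u - (u 0 ^ 2 + u 1 ^ 2 + u 2 ^ 2) • n)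
      = (n 0 * u 0 + n 1 * u 1 + n 2 * u 2) •
        ((n 0 * u 0 + n 1 * u 1 + n 2 * u 2) • u - (u 0 ^ 2 + u 1 ^ 2 + u 2 ^ 2) • n) := by
  refine ⟨?_, ?_, ?_⟩ <;> funext i <;> fin_cases i <;>
    simp [Matrix.mulVec, dotProduct, crossProduct, Fin.sum_univ_three] <;>
    nlinarith [hn, sq_nonneg (n 0), sq_nonneg (n 1), sq_nonneg (n 2)]
end

section
/- For any nonzero velocity u ∈ ℝ³ there exists a unit vector n such that the matrix R = [ n | n×u | (n·u)u − ‖u‖²n ] is singular; in particular, any unit n orthogonal to u (or parallel to u) yields det R = 0. Hence the quasilinear vector-potential system is only weakly hyperbolic. -/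
open Matrix

/-- The matrix of right eigenvectors `R = [ n | n×u | (n·u)u − ‖u‖²n ]`. -/
noncomputable def Rmat (n u : Fin 3 → ℝ) : Matrix (Fin 3) (Fin 3) ℝ :=
  Matrix.of fun i j =>
    ![n, crossProduct n u,
      (n 0 * u 0 + n 1 * u 1 + n 2 * u 2) • u - (u 0 ^ 2 + u 1 ^ 2 + u 2 ^ 2) • n] j i

lemma det_Rmat (n u : Fin 3 → ℝ) :
    (Rmat n u).det =
      (n 0 * u 0 + n 1 * u 1 + n 2 * u 2) ^ 3
        - (n 0 ^ 2 + n 1 ^ 2 + n 2 ^ 2) * (n 0 * u 0 + n 1 * u 1 + n 2 * u 2)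
          * (u 0 ^ 2 + u 1 ^ 2 + u 2 ^ 2) := by
  simp [Rmat, Matrix.det_fin_three, crossProduct]
  ring

theorem weak_hyperbolicity :
    (∀ u : Fin 3 → ℝ, u ≠ 0 →
      ∃ n : Fin 3 → ℝ, n 0 ^ 2 + n 1 ^ 2 + n 2 ^ 2 = 1 ∧ (Rmat n u).det = 0)
    ∧ (∀ u n : Fin 3 → ℝ, u ≠ 0 → n 0 ^ 2 + n 1 ^ 2 + n 2 ^ 2 = 1 →
        (n 0 * u 0 + n 1 * u 1 + n 2 * u 2 = 0 ∨ ∃ c : ℝ, u = c • n) →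
        (Rmat n u).det = 0) := by
  constructor
  · intro u hu
    set S : ℝ := u 0 ^ 2 + u 1 ^ 2 + u 2 ^ 2 with hS
    have hcomp : u 0 ≠ 0 ∨ u 1 ≠ 0 ∨ u 2 ≠ 0 := by
      by_contra hc; push_neg at hc; obtain ⟨a, b, c⟩ := hc
      apply hu; funext i; fin_cases i <;> assumption
    have hSpos : 0 < S := by
      rcases hcomp with h | h | h <;> positivity
    set s : ℝ := Real.sqrt S with hs
    have hspos : 0 < s := Real.sqrt_pos.mpr hSpos
    have hs2 : s ^ 2 = S := Real.sq_sqrt hSpos.le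
    refine ⟨s⁻¹ • u, ?_, ?_⟩
    · simp only [Pi.smul_apply, smul_eq_mul]
      field_simp
      nlinarith
    · rw [det_Rmat]
      simp only [Pi.smul_apply, smul_eq_mul]
      have h1 : s⁻¹ * u 0 * u 0 + s⁻¹ * u 1 * u 1 + s⁻¹ * u 2 * u 2 = s⁻¹ * S := by ring
      have h2 : (s⁻¹ * u 0) ^ 2 + (s⁻¹ * u 1) ^ 2 + (s⁻¹ * u 2) ^ 2 = s⁻¹ ^ 2 * S := by ring
      rw [h1, h2]
      have : s⁻¹ * S = s := by
        field_simp; nlinarith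
      rw [this]
      have : s⁻¹ ^ 2 * S = 1 := by field_simp; nlinarith
      rw [this]
      nlinarith
  · intro u n hu hn h
    rw [det_Rmat, hn]
    rcases h with h | ⟨c, hc⟩
    · rw [h]; ring
    · have h0 := congrFun hc 0
      have h1 := congrFun hc 1
      have h2 := congrFun hc 2
      simp only [Pi.smul_apply, smul_eq_mul] at h0 h1 h2
      rw [h0, h1, h2]
      linear_combination (c ^ 3 * (n 0 ^ 2 + n 1 ^ 2 + n 2 ^ 2) ^ 2) * hn
end
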